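/- arXiv:1205.5779 — 3 statements merged into one kernel-verified Lean document; each statement's English description precedes it below -/
import Mathlib

section
/- A set Q of quartets over a label set L is compatible if and only if the corresponding set of characters C_Q = {χ_q : q ∈ Q} is compatible, where for q = ab|cd the character χ_q is the partition of L with one block {a,b}, one block {c,d}, and a singleton block {ℓ} for each ℓ ∈ L \ {a,b,c,d}. -/
open SimpleGraph

universe u

/-- A quartet `xy|zw`: an unordered pair of unordered pairs of labels. -/
def quartet {L : Type u} (x y z w : L) : Sym2 (Sym2 L) := s(s(x, y), s(z, w))

/-- `q` is a genuine quartet: four pairwise distinct labels. -/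
def IsQuartet {L : Type u} (q : Sym2 (Sym2 L)) : Prop :=
  ∃ x y z w : L, x ≠ y ∧ x ≠ z ∧ x ≠ w ∧ y ≠ z ∧ y ≠ w ∧ z ≠ w ∧ q = quartet x y z w

/-- The label set `L(Q)` of a set of quartets. -/
def qLabelSet {L : Type u} (Q : Set (Sym2 (Sym2 L))) : Set L :=
  {x | ∃ q ∈ Q, ∃ p, p ∈ q ∧ x ∈ p}

/-- An unrooted phylogenetic tree whose leaves are in bijection with the label set `S`:
a finite tree with no degree-2 vertex, whose degree-1 vertices are exactly the labeled ones. -/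
structure UTree (L : Type u) (S : Set L) where
  V : Type
  fV : Fintype V
  G : SimpleGraph V
  isTree : G.IsTree
  label : S → V
  labelInj : Function.Injective label
  leafIff : ∀ v : V, (∃ l : S, label l = v) ↔ (G.neighborSet v).ncard = 1
  noDeg2 : ∀ v : V, (G.neighborSet v).ncard ≠ 2

/-- `T` displays the quartet `xy|zw`: the path between the leaves labeled `x` and `y`
is vertex-disjoint from the path between the leaves labeled `z` and `w`. -/
def UTree.displays4 {L : Type u} {S : Set L} (T : UTree L S) (x y z w : L) : Prop :=
  ∃ (hx : x ∈ S) (hy : y ∈ S) (hz : z ∈ S) (hw : w ∈ S)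
    (p : T.G.Walk (T.label ⟨x, hx⟩) (T.label ⟨y, hy⟩))
    (p' : T.G.Walk (T.label ⟨z, hz⟩) (T.label ⟨w, hw⟩)),
    p.IsPath ∧ p'.IsPath ∧ ∀ v, v ∈ p.support → v ∉ p'.support

def UTree.displays {L : Type u} {S : Set L} (T : UTree L S) (q : Sym2 (Sym2 L)) : Prop :=
  ∀ x y z w : L, q = quartet x y z w → T.displays4 x y z w

/-- A set of quartets is compatible over label set `S` if a single tree displays all of them. -/
def QCompat {L : Type u} (S : Set L) (Q : Set (Sym2 (Sym2 L))) : Prop :=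
  ∃ T : UTree L S, ∀ q ∈ Q, T.displays q

/-- `χ` is a partition of the label set `S` (a character on `S`). -/
def IsPartitionOn {L : Type u} (S : Set L) (χ : Set (Set L)) : Prop :=
  (∀ B ∈ χ, B.Nonempty ∧ B ⊆ S) ∧ ∀ x ∈ S, ∃! B, B ∈ χ ∧ x ∈ B

/-- The vertex set of the minimal subtree of `T` spanning the leaves labeled by `B`. -/
def UTree.span {L : Type u} {S : Set L} (T : UTree L S) (B : Set L) : Set T.V :=
  {v | ∃ (x y : L) (hx : x ∈ S) (hy : y ∈ S), x ∈ B ∧ y ∈ B ∧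
    ∃ p : T.G.Walk (T.label ⟨x, hx⟩) (T.label ⟨y, hy⟩), p.IsPath ∧ v ∈ p.support}

/-- The character `χ` is convex on `T`: spanning subtrees of distinct blocks are disjoint. -/
def UTree.convexOn {L : Type u} {S : Set L} (T : UTree L S) (χ : Set (Set L)) : Prop :=
  ∀ B ∈ χ, ∀ B' ∈ χ, B ≠ B' → ∀ v ∈ T.span B, v ∉ T.span B'

/-- A set of characters is compatible over `S` if a single tree makes all of them convex. -/
def CCompat {L : Type u} (S : Set L) (C : Set (Set (Set L))) : Prop :=
  ∃ T : UTree L S, ∀ χ ∈ C, T.convexOn χ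

/-- The character `χ_q` corresponding to the quartet `xy|zw`:
blocks `{x,y}`, `{z,w}` and a singleton for every other label of `S`. -/
def chiQ {L : Type u} (S : Set L) (x y z w : L) : Set (Set L) :=
  {{x, y}, {z, w}} ∪ {B | ∃ l ∈ S, l ≠ x ∧ l ≠ y ∧ l ≠ z ∧ l ≠ w ∧ B = {l}}

/-- The set of characters corresponding to a set of quartets. -/
def CQ {L : Type u} (S : Set L) (Q : Set (Sym2 (Sym2 L))) : Set (Set (Set L)) :=
  {χ | ∃ q ∈ Q, ∃ x y z w : L, q = quartet x y z w ∧ χ = chiQ S x y z w}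

/-- A rooted phylogenetic tree on label set `S`. -/
structure RTree (L : Type u) (S : Set L) where
  V : Type
  fV : Fintype V
  G : SimpleGraph V
  isTree : G.IsTree
  root : V
  label : S → V
  labelInj : Function.Injective label
  leafIff : ∀ v : V, (∃ l : S, label l = v) ↔ ((G.neighborSet v).ncard = 1 ∧ v ≠ root)
  noDeg2 : ∀ v : V, v ≠ root → (G.neighborSet v).ncard ≠ 2

/-- `u` is an ancestor of `v`: `u` lies on the path from the root to `v`. -/
def RTree.anc {L : Type u} {S : Set L} (T : RTree L S) (u v : T.V) : Prop :=
  ∃ p : T.G.Walk T.root v, p.IsPath ∧ u ∈ p.support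

/-- `m` is the most recent common ancestor of the set `A` of vertices. -/
def RTree.isMRCA {L : Type u} {S : Set L} (T : RTree L S) (A : Set T.V) (m : T.V) : Prop :=
  (∀ v ∈ A, T.anc m v) ∧ ∀ w, (∀ v ∈ A, T.anc w v) → T.anc w m

/-- `T` displays the rooted triplet `ab|c`: the MRCA of `{a,b}` is a proper
descendant of the MRCA of `{a,b,c}`. -/
def RTree.displays3 {L : Type u} {S : Set L} (T : RTree L S) (a b c : L) : Prop :=
  ∃ (ha : a ∈ S) (hb : b ∈ S) (hc : c ∈ S) (m M : T.V),
    T.isMRCA {T.label ⟨a, ha⟩, T.label ⟨b, hb⟩} m ∧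
    T.isMRCA {T.label ⟨a, ha⟩, T.label ⟨b, hb⟩, T.label ⟨c, hc⟩} M ∧
    T.anc M m ∧ M ≠ m

/-- A rooted triplet `ab|c` is encoded as the pair `(s(a,b), c)`. -/
def RTree.displays {L : Type u} {S : Set L} (T : RTree L S) (t : Sym2 L × L) : Prop :=
  ∀ a b c : L, t = (s(a, b), c) → T.displays3 a b c

def IsTriplet {L : Type u} (t : Sym2 L × L) : Prop :=
  ∃ a b c : L, a ≠ b ∧ a ≠ c ∧ b ≠ c ∧ t = (s(a, b), c)

/-- The label set `L(R)` of a set of rooted triplets. -/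
def tLabelSet {L : Type u} (R : Set (Sym2 L × L)) : Set L :=
  {x | ∃ t ∈ R, x ∈ t.1 ∨ x = t.2}

/-- A set of rooted triplets is compatible if one rooted tree displays all of them. -/
def RCompat {L : Type u} (S : Set L) (R : Set (Sym2 L × L)) : Prop :=
  ∃ T : RTree L S, ∀ t ∈ R, T.displays t

/-- The graph `[R,S]`: vertices `S`, with an edge `{a,b}` whenever `ab|c ∈ R` for some `c ∈ S`. -/
def tripGraph {L : Type u} (R : Set (Sym2 L × L)) (S : Set L) : SimpleGraph L where
  Adj x y := x ≠ y ∧ x ∈ S ∧ y ∈ S ∧ ∃ c ∈ S, (s(x, y), c) ∈ R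
  symm := ⟨by
    rintro x y ⟨hxy, hx, hy, c, hc, hR⟩
    exact ⟨hxy.symm, hy, hx, c, hc, by rwa [Sym2.eq_swap]⟩⟩
  loopless := ⟨by rintro x ⟨hx, -⟩; exact hx rfl⟩

/-- The label set `L_{s,t} = {a_1,…,a_s, b_1,…,b_t}`, with `a_i = inl i` and `b_j = inr j`. -/
def Lst (s t : ℕ) : Set (ℕ ⊕ ℕ) := (Sum.inl '' Set.Icc 1 s) ∪ (Sum.inr '' Set.Icc 1 t)

/-- The quartet set `Q_{s,t} = {a_1b_1|a_sb_t} ∪ {a_i a_{i+1} | b_j b_{j+1} : 1 ≤ i < s, 1 ≤ j < t}`. -/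
def Qst (s t : ℕ) : Finset (Sym2 (Sym2 (ℕ ⊕ ℕ))) :=
  insert (quartet (Sum.inl 1) (Sum.inr 1) (Sum.inl s) (Sum.inr t))
    ((Finset.Ico 1 s ×ˢ Finset.Ico 1 t).image
      (fun p => quartet (Sum.inl p.1) (Sum.inl (p.1 + 1)) (Sum.inr p.2) (Sum.inr (p.2 + 1))))

/-!
A path in a tree meets a leaf only at its ends, because every inner vertex of a path has two
distinct neighbours. So the minimal subtree spanned by a pair block `{a, b}` is the `a`–`b`
path and that of a singleton block `{ℓ}` is the leaf `ℓ`. Convexity of `χ_q` for `q = ab|cd`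
thus says exactly that the `a`–`b` and `c`–`d` paths are disjoint; the singleton blocks impose
nothing more.
-/

namespace SimpleGraph.Walk

variable {V : Type*} {G : SimpleGraph V} {a b v : V}

lemma IsPath.exists_adj_adj_ne_of_mem_support {p : G.Walk a b} (hp : p.IsPath)
    (hv : v ∈ p.support) (ha : v ≠ a) (hb : v ≠ b) :
    ∃ u₁ u₂, G.Adj v u₁ ∧ G.Adj v u₂ ∧ u₁ ≠ u₂ := by
  obtain ⟨q, r, -, -, rfl⟩ := hp.mem_support_iff_exists_append.mp hv
  have hq : ¬q.Nil := not_nil_of_ne ha.symm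
  have hr : ¬r.Nil := not_nil_of_ne hb
  refine ⟨q.penultimate, r.snd, (q.adj_penultimate hq).symm, r.adj_snd hr, ?_⟩
  exact hp.ne_of_mem_support_of_append (r.adj_snd hr).ne.symm (q.getVert_mem_support _)
    (r.getVert_mem_support _)

lemma IsPath.eq_or_eq_of_mem_support_of_ncard_neighborSet_eq_one {p : G.Walk a b}
    (hp : p.IsPath) (hv : v ∈ p.support) (hleaf : (G.neighborSet v).ncard = 1) :
    v = a ∨ v = b := by
  by_contra! hab
  obtain ⟨u₁, u₂, h₁, h₂, hne⟩ := hp.exists_adj_adj_ne_of_mem_support hv hab.1 hab.2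
  obtain ⟨u, hu⟩ := Set.ncard_eq_one.mp hleaf
  have h₁ : u₁ ∈ ({u} : Set V) := hu ▸ h₁
  have h₂ : u₂ ∈ ({u} : Set V) := hu ▸ h₂
  exact hne (h₁.trans h₂.symm)

end SimpleGraph.Walk

namespace UTree

variable {L : Type u} {S : Set L} (T : UTree L S)

lemma label_mem_support_iff {x y l : L} {hx : x ∈ S} {hy : y ∈ S} (hl : l ∈ S)
    {p : T.G.Walk (T.label ⟨x, hx⟩) (T.label ⟨y, hy⟩)} (hp : p.IsPath) :
    T.label ⟨l, hl⟩ ∈ p.support ↔ l = x ∨ l = y := by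
  refine ⟨fun h => ?_, ?_⟩
  · have hleaf := (T.leafIff _).mp ⟨⟨l, hl⟩, rfl⟩
    simpa [T.labelInj.eq_iff] using hp.eq_or_eq_of_mem_support_of_ncard_neighborSet_eq_one h hleaf
  · rintro (rfl | rfl)
    · exact p.start_mem_support
    · exact p.end_mem_support

lemma mem_span_pair_iff {x y : L} {hx : x ∈ S} {hy : y ∈ S}
    {p : T.G.Walk (T.label ⟨x, hx⟩) (T.label ⟨y, hy⟩)} (hp : p.IsPath) (v : T.V) :
    v ∈ T.span {x, y} ↔ v ∈ p.support := by
  refine ⟨?_, fun hv => ⟨x, y, hx, hy, by simp, by simp, p, hp, hv⟩⟩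
  rintro ⟨a, b, ha, hb, haB, hbB, r, hr, hvr⟩
  have huniq := T.isTree.existsUnique_path
  rcases haB with rfl | rfl <;> rcases hbB with rfl | rfl
  · obtain rfl := (huniq _ _).unique hr .nil
    simp only [Walk.support_nil, List.mem_singleton] at hvr
    exact hvr ▸ p.start_mem_support
  · rwa [(huniq _ _).unique hr hp] at hvr
  · rwa [(huniq _ _).unique hr hp.reverse, Walk.support_reverse, List.mem_reverse] at hvr
  · obtain rfl := (huniq _ _).unique hr .nil
    simp only [Walk.support_nil, List.mem_singleton] at hvr
    exact hvr ▸ p.end_mem_support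

lemma mem_span_singleton_iff {l : L} (v : T.V) :
    v ∈ T.span {l} ↔ ∃ hl : l ∈ S, v = T.label ⟨l, hl⟩ := by
  constructor
  · rintro ⟨a, b, ha, hb, rfl, rfl, r, hr, hv⟩
    obtain rfl := (T.isTree.existsUnique_path _ _).unique hr .nil
    exact ⟨ha, by simpa using hv⟩
  · rintro ⟨hl, rfl⟩
    exact ⟨l, l, hl, hl, rfl, rfl, .nil, .nil, by simp⟩

lemma convexOn_chiQ_of_displays4 {x y z w : L} (h : T.displays4 x y z w) :
    T.convexOn (chiQ S x y z w) := by
  obtain ⟨hx, hy, hz, hw, p, p', hp, hp', hdisj⟩ := h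
  intro B hB B' hB' hne v hvB hvB'
  simp only [chiQ, Set.mem_union, Set.mem_insert_iff, Set.mem_singleton_iff,
    Set.mem_ofPred_eq] at hB hB'
  rcases hB with (rfl | rfl) | ⟨l, hl, hlx, hly, hlz, hlw, rfl⟩ <;>
    rcases hB' with (rfl | rfl) | ⟨l', hl', hl'x, hl'y, hl'z, hl'w, rfl⟩ <;>
    simp only [T.mem_span_pair_iff hp, T.mem_span_pair_iff hp', T.mem_span_singleton_iff]
      at hvB hvB'
  · exact hne rfl
  · exact hdisj v hvB hvB'
  · obtain ⟨_, rfl⟩ := hvB'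
    exact ((T.label_mem_support_iff _ hp).mp hvB).elim hl'x hl'y
  · exact hdisj v hvB' hvB
  · exact hne rfl
  · obtain ⟨_, rfl⟩ := hvB'
    exact ((T.label_mem_support_iff _ hp').mp hvB).elim hl'z hl'w
  · obtain ⟨_, rfl⟩ := hvB
    exact ((T.label_mem_support_iff _ hp).mp hvB').elim hlx hly
  · obtain ⟨_, rfl⟩ := hvB
    exact ((T.label_mem_support_iff _ hp').mp hvB').elim hlz hlw
  · obtain ⟨_, rfl⟩ := hvB
    obtain ⟨_, h⟩ := hvB'
    exact hne (congrArg _ (Subtype.mk.inj (T.labelInj h)))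

lemma displays4_of_convexOn_chiQ {x y z w : L} (hx : x ∈ S) (hy : y ∈ S) (hz : z ∈ S)
    (hw : w ∈ S) (hne : ({x, y} : Set L) ≠ {z, w}) (h : T.convexOn (chiQ S x y z w)) :
    T.displays4 x y z w := by
  obtain ⟨p, hp⟩ := (T.isTree.existsUnique_path (T.label ⟨x, hx⟩) (T.label ⟨y, hy⟩)).exists
  obtain ⟨p', hp'⟩ := (T.isTree.existsUnique_path (T.label ⟨z, hz⟩) (T.label ⟨w, hw⟩)).exists
  refine ⟨hx, hy, hz, hw, p, p', hp, hp', fun v hv hv' => ?_⟩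
  exact h {x, y} (by simp [chiQ]) {z, w} (by simp [chiQ]) hne v
    ((T.mem_span_pair_iff hp v).mpr hv) ((T.mem_span_pair_iff hp' v).mpr hv')

end UTree

lemma IsQuartet.pair_ne {L : Type u} {x y z w : L} (h : IsQuartet (quartet x y z w)) :
    ({x, y} : Set L) ≠ {z, w} := by
  intro hxy
  obtain ⟨a, b, c, d, -, hac, had, -, -, -, hq⟩ := h
  have hsym : s(x, y) = s(z, w) := Sym2.ext fun t => by
    simpa using Set.ext_iff.mp hxy t
  have hdiag : (quartet a b c d).IsDiag := by
    rw [← hq, quartet, Sym2.mk_isDiag_iff]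
    exact hsym
  rw [quartet, Sym2.mk_isDiag_iff, Sym2.eq_iff] at hdiag
  rcases hdiag with ⟨rfl, -⟩ | ⟨rfl, -⟩
  exacts [hac rfl, had rfl]

lemma mem_qLabelSet_of_quartet_mem {L : Type u} {Q : Set (Sym2 (Sym2 L))} {x y z w : L}
    (hq : quartet x y z w ∈ Q) :
    x ∈ qLabelSet Q ∧ y ∈ qLabelSet Q ∧ z ∈ qLabelSet Q ∧ w ∈ qLabelSet Q := by
  refine ⟨⟨_, hq, s(x, y), ?_, ?_⟩, ⟨_, hq, s(x, y), ?_, ?_⟩,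
    ⟨_, hq, s(z, w), ?_, ?_⟩, ⟨_, hq, s(z, w), ?_, ?_⟩⟩ <;> simp [quartet]

/-- a set `Q` of quartets is compatible iff the corresponding set of
characters `C_Q` is compatible. -/
theorem quartets_compat_iff_chars_compat {L : Type} (Q : Set (Sym2 (Sym2 L)))
    (hQ : ∀ q ∈ Q, IsQuartet q) :
    QCompat (qLabelSet Q) Q ↔ CCompat (qLabelSet Q) (CQ (qLabelSet Q) Q) := by
  constructor
  · rintro ⟨T, hT⟩
    refine ⟨T, ?_⟩
    rintro χ ⟨q, hq, x, y, z, w, rfl, rfl⟩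
    exact T.convexOn_chiQ_of_displays4 (hT _ hq x y z w rfl)
  · rintro ⟨T, hT⟩
    refine ⟨T, ?_⟩
    rintro q hq x y z w rfl
    obtain ⟨hx, hy, hz, hw⟩ := mem_qLabelSet_of_quartet_mem hq
    exact T.displays4_of_convexOn_chiQ hx hy hz hw (hQ _ hq).pair_ne
      (hT _ ⟨_, hq, x, y, z, w, rfl, rfl⟩)
end

section
/- For all integers s, t ≥ 2, the quartet set Q_{s,t} is incompatible: no unrooted phylogenetic tree on the label set L_{s,t} displays all quartets in Q_{s,t}. -/
open SimpleGraph

universe u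

/-!
In a tree, disjointness of the paths `ab | cd` propagates along chains: if the paths `ab` and
`be` both avoid the path `cd`, so does the path `ae`, since it runs inside their union.
Chaining the quartets `aᵢaᵢ₊₁ | bⱼbⱼ₊₁` therefore yields `a₁a_s | b₁b_t`. But a tree cannot
display both `a₁b₁ | a_sb_t` and `a₁a_s | b₁b_t`: the walk `a₁ → a_s → b_t → b₁` covers every
edge of the path `a₁b₁`, and an edge of that path leaving the path `a₁a_s` can lie on none of
the three legs.
-/

namespace SimpleGraph

variable {V : Type*} {G : SimpleGraph V}

def DisjointPaths (G : SimpleGraph V) (a b c d : V) : Prop :=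
  ∃ (p : G.Walk a b) (q : G.Walk c d),
    p.IsPath ∧ q.IsPath ∧ ∀ v ∈ p.support, v ∉ q.support

lemma DisjointPaths.symm {a b c d : V} (h : G.DisjointPaths a b c d) : G.DisjointPaths c d a b :=
  let ⟨p, q, hp, hq, hpq⟩ := h
  ⟨q, p, hq, hp, fun v hvq hvp => hpq v hvp hvq⟩

namespace IsAcyclic

lemma eq_bypass_of_isPath [DecidableEq V] (hG : G.IsAcyclic) {u v : V} {p : G.Walk u v}
    (hp : p.IsPath) (q : G.Walk u v) : p = q.bypass :=
  congrArg Subtype.val ((hG.subsingleton_path u v).elim ⟨p, hp⟩ ⟨q.bypass, q.bypass_isPath⟩)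

lemma support_subset_of_isPath (hG : G.IsAcyclic) {u v : V} {p : G.Walk u v} (hp : p.IsPath)
    (q : G.Walk u v) : p.support ⊆ q.support := by
  classical
  rw [hG.eq_bypass_of_isPath hp q]
  exact q.support_bypass_subset_support

lemma edges_subset_of_isPath (hG : G.IsAcyclic) {u v : V} {p : G.Walk u v} (hp : p.IsPath)
    (q : G.Walk u v) : p.edges ⊆ q.edges := by
  classical
  rw [hG.eq_bypass_of_isPath hp q]
  exact q.edges_bypass_subset_edges

lemma disjointPaths_trans (hG : G.IsAcyclic) {a b e c d : V} (hab : G.DisjointPaths a b c d)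
    (hbe : G.DisjointPaths b e c d) : G.DisjointPaths a e c d := by
  classical
  obtain ⟨p, q, -, hq, hpq⟩ := hab
  obtain ⟨p', q', -, -, hpq'⟩ := hbe
  refine ⟨(p.append p').bypass, q, (p.append p').bypass_isPath, hq, fun v hv hvq => ?_⟩
  rcases (p.mem_support_append_iff p').mp ((p.append p').support_bypass_subset_support hv) with
    hvp | hvp'
  · exact hpq v hvp hvq
  · exact hpq' v hvp' (hG.support_subset_of_isPath hq q' hvq)

lemma disjointPaths_of_chain (hG : G.IsAcyclic) (f : ℕ → V) {c d : V} {m n : ℕ} (hmn : m < n)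
    (h : ∀ i, m ≤ i → i < n → G.DisjointPaths (f i) (f (i + 1)) c d) :
    G.DisjointPaths (f m) (f n) c d := by
  induction n, hmn using Nat.le_induction with
  | base => exact h m le_rfl m.lt_succ_self
  | succ n hmn ih =>
    exact hG.disjointPaths_trans (ih fun i hmi hin => h i hmi (by omega))
      (h n (by omega) n.lt_succ_self)

lemma disjointPaths_of_grid (hG : G.IsAcyclic) (f g : ℕ → V) {m n m' n' : ℕ} (hmn : m < n)
    (hmn' : m' < n')
    (h : ∀ i j, m ≤ i → i < n → m' ≤ j → j < n' →
      G.DisjointPaths (f i) (f (i + 1)) (g j) (g (j + 1))) :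
    G.DisjointPaths (f m) (f n) (g m') (g n') :=
  (hG.disjointPaths_of_chain g hmn' fun j hj hj' =>
    (hG.disjointPaths_of_chain f hmn fun i hi hi' => h i j hi hi' hj hj').symm).symm

lemma not_disjointPaths_of_disjointPaths (hG : G.IsAcyclic) {x y z w : V}
    (h : G.DisjointPaths x y z w) : ¬ G.DisjointPaths x z y w := by
  rintro ⟨C, D, -, -, hCD⟩
  obtain ⟨A, B, hA, -, hAB⟩ := h
  obtain ⟨d, hdA, hdC, hdC'⟩ :=
    A.exists_boundary_dart {v | v ∈ C.support} C.start_mem_support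
      fun hyC => hCD y hyC D.start_mem_support
  have hd : s(d.fst, d.snd) ∈ (C.append (B.append D.reverse)).edges :=
    hG.edges_subset_of_isPath hA _ (List.mem_map_of_mem hdA)
  simp only [Walk.edges_append, Walk.edges_reverse, List.mem_append, List.mem_reverse] at hd
  have hdA' := A.dart_fst_mem_support_of_mem_darts hdA
  rcases hd with hd | hd | hd
  · exact hdC' (C.snd_mem_support_of_mem_edges hd)
  · exact hAB _ hdA' (B.fst_mem_support_of_mem_edges hd)
  · exact hCD _ hdC (D.fst_mem_support_of_mem_edges hd)

end IsAcyclic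

end SimpleGraph

namespace UTree

variable {L : Type u} {S : Set L}

open Classical in
noncomputable def vertexOf (T : UTree L S) (x : L) : T.V :=
  if hx : x ∈ S then T.label ⟨x, hx⟩ else T.isTree.connected.nonempty.some

lemma displays4.disjointPaths {T : UTree L S} {x y z w : L} (h : T.displays4 x y z w) :
    T.G.DisjointPaths (T.vertexOf x) (T.vertexOf y) (T.vertexOf z) (T.vertexOf w) := by
  obtain ⟨hx, hy, hz, hw, h⟩ := h
  simp only [vertexOf, dif_pos hx, dif_pos hy, dif_pos hz, dif_pos hw]
  exact h

end UTree

/-- for all s, t ≥ 2, `Q_{s,t}` is incompatible. -/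
theorem Qst_incompatible (s t : ℕ) (hs : 2 ≤ s) (ht : 2 ≤ t) :
    ¬ QCompat (Lst s t) ↑(Qst s t) := by
  rintro ⟨T, hT⟩
  have displays (x y z w) (hq : quartet x y z w ∈ Qst s t) :
      T.G.DisjointPaths (T.vertexOf x) (T.vertexOf y) (T.vertexOf z) (T.vertexOf w) :=
    (hT _ hq x y z w rfl).disjointPaths
  have hG := T.isTree.isAcyclic
  refine hG.not_disjointPaths_of_disjointPaths (displays _ _ _ _ (Finset.mem_insert_self _ _))
    (hG.disjointPaths_of_grid (fun i => T.vertexOf (Sum.inl i)) (fun j => T.vertexOf (Sum.inr j))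
      (by omega) (by omega) fun i j hi hi' hj hj' => displays _ _ _ _ ?_)
  exact Finset.mem_insert_of_mem (Finset.mem_image.mpr ⟨(i, j), by simp [*], rfl⟩)
end

section
/- Let Q be a set of quartets over n labels that is incompatible while every proper subset of Q is compatible, and let r = n - 2. Then the set C_Q of r-state characters corresponding to Q has cardinality |Q|, is incompatible, and every proper subset of C_Q is compatible. -/
open SimpleGraph

universe u

/-!
A tree makes `χ_q` convex exactly when it displays `q`: the spanning subtrees of the pair blocks
`{a, b}` and `{c, d}` are the paths `a–b` and `c–d`, while a singleton block `{ℓ}` spans only the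
leaf `ℓ`, which lies on no path between two other leaves. Hence every `Q' ⊆ Q` is compatible
exactly when `C_{Q'}` is, and every subset of `C_Q` is such a `C_{Q'}`. Since `q` is recovered from
the two pair blocks of `χ_q`, the map `q ↦ χ_q` is injective on quartets, and each `χ_q` has
`n - 2` blocks because its two pairs absorb four of the `n` labels.
-/

theorem SimpleGraph.Walk.IsPath.eq_start_or_eq_end_of_mem_support {V : Type*}
    {G : SimpleGraph V} {u v c : V} {p : G.Walk u v} (hp : p.IsPath) (hc : c ∈ p.support)
    (hleaf : (G.neighborSet c).ncard = 1) : c = u ∨ c = v := by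
  by_contra! hne
  obtain ⟨q, r, rfl⟩ := p.mem_support_iff_exists_append.mp hc
  have hq : ¬ q.Nil := Walk.not_nil_of_ne hne.1.symm
  have hr : ¬ r.Nil := Walk.not_nil_of_ne hne.2
  -- both path-neighbours of `c` are its unique neighbour
  have hsame : q.penultimate = r.snd := by
    obtain ⟨a, ha⟩ := Set.ncard_eq_one.mp hleaf
    have h1 : q.penultimate ∈ G.neighborSet c := (Walk.adj_penultimate hq).symm
    have h2 : r.snd ∈ G.neighborSet c := Walk.adj_snd hr
    rw [ha, Set.mem_singleton_iff] at h1 h2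
    rw [h1, h2]
  have hdisj := hp.disjoint_support_of_append hr
  rw [Walk.support_tail_of_not_nil r hr] at hdisj
  exact hdisj (q.getVert_mem_support _) (hsame ▸ r.snd_mem_tail_support hr)

namespace UTree

variable {L : Type u} {S : Set L} (T : UTree L S)

lemma eq_or_eq_of_label_mem_support {a b l : S} {p : T.G.Walk (T.label a) (T.label b)}
    (hp : p.IsPath) (hl : T.label l ∈ p.support) : l = a ∨ l = b :=
  (hp.eq_start_or_eq_end_of_mem_support hl ((T.leafIff _).mp ⟨l, rfl⟩)).imp
    (fun h => T.labelInj h) (fun h => T.labelInj h)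

lemma label_mem_span_iff {l : L} (hl : l ∈ S) {B : Set L} :
    T.label ⟨l, hl⟩ ∈ T.span B ↔ l ∈ B := by
  constructor
  · rintro ⟨x, y, hx, hy, hxB, hyB, p, hp, hlp⟩
    rcases T.eq_or_eq_of_label_mem_support hp hlp with h | h
    · exact Subtype.mk.inj h ▸ hxB
    · exact Subtype.mk.inj h ▸ hyB
  · intro hlB
    exact ⟨l, l, hl, hl, hlB, hlB, Walk.nil, Walk.IsPath.nil, Walk.start_mem_support _⟩

lemma span_singleton_subset {l : L} (hl : l ∈ S) : T.span {l} ⊆ {T.label ⟨l, hl⟩} := by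
  rintro v ⟨x, y, hx, hy, rfl, rfl, p, hp, hv⟩
  rw [(T.isTree.existsUnique_path _ _).unique hp Walk.IsPath.nil] at hv
  simpa using hv

lemma disjoint_span_singleton {l : L} (hl : l ∈ S) {B : Set L} (hlB : l ∉ B) :
    Disjoint (T.span {l}) (T.span B) :=
  (Set.disjoint_singleton_left.mpr (mt (T.label_mem_span_iff hl).mp hlB)).mono_left
    (T.span_singleton_subset hl)

lemma span_pair_eq_support {a b : L} (ha : a ∈ S) (hb : b ∈ S)
    {p : T.G.Walk (T.label ⟨a, ha⟩) (T.label ⟨b, hb⟩)} (hp : p.IsPath) :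
    T.span {a, b} = {v | v ∈ p.support} := by
  refine Set.Subset.antisymm ?_ fun v hv => ⟨a, b, ha, hb, by simp, by simp, p, hp, hv⟩
  rintro v ⟨x, y, hx, hy, hxB, hyB, q, hq, hv⟩
  have huniq := T.isTree.existsUnique_path (T.label ⟨a, ha⟩) (T.label ⟨b, hb⟩)
  rcases hxB with rfl | rfl <;> rcases hyB with rfl | rfl
  · rw [(T.isTree.existsUnique_path _ _).unique hq Walk.IsPath.nil] at hv
    simp only [Walk.support_nil, List.mem_singleton] at hv
    exact hv ▸ p.start_mem_support
  · exact huniq.unique hq hp ▸ hv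
  · show v ∈ p.support
    rw [← huniq.unique hq.reverse hp, Walk.support_reverse]
    exact List.mem_reverse.mpr hv
  · rw [(T.isTree.existsUnique_path _ _).unique hq Walk.IsPath.nil] at hv
    simp only [Walk.support_nil, List.mem_singleton] at hv
    exact hv ▸ p.end_mem_support

lemma displays4_iff_disjoint_span {x y z w : L} (hx : x ∈ S) (hy : y ∈ S) (hz : z ∈ S)
    (hw : w ∈ S) : T.displays4 x y z w ↔ Disjoint (T.span {x, y}) (T.span {z, w}) := by
  constructor
  · rintro ⟨_, _, _, _, p, p', hp, hp', hdisj⟩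
    rw [T.span_pair_eq_support _ _ hp, T.span_pair_eq_support _ _ hp']
    exact Set.disjoint_left.mpr hdisj
  · intro h
    obtain ⟨p, hp, -⟩ := T.isTree.existsUnique_path (T.label ⟨x, hx⟩) (T.label ⟨y, hy⟩)
    obtain ⟨p', hp', -⟩ := T.isTree.existsUnique_path (T.label ⟨z, hz⟩) (T.label ⟨w, hw⟩)
    rw [T.span_pair_eq_support _ _ hp, T.span_pair_eq_support _ _ hp'] at h
    exact ⟨hx, hy, hz, hw, p, p', hp, hp', Set.disjoint_left.mp h⟩

lemma convexOn_chiQ_iff {x y z w : L} (hne : ({x, y} : Set L) ≠ {z, w}) :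
    T.convexOn (chiQ S x y z w) ↔ Disjoint (T.span {x, y}) (T.span {z, w}) := by
  refine ⟨fun h => Set.disjoint_left.mpr (h _ (by simp [chiQ]) _ (by simp [chiQ]) hne), ?_⟩
  intro h B hB B' hB' hBB'
  refine Set.disjoint_left.mp ?_
  rcases hB with (rfl | rfl) | ⟨l, hl, h1, h2, h3, h4, rfl⟩ <;>
    rcases hB' with (rfl | rfl) | ⟨l', hl', h1', h2', h3', h4', rfl⟩
  · exact absurd rfl hBB'
  · exact h
  · exact (T.disjoint_span_singleton hl' (by simp [h1', h2'])).symm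
  · exact h.symm
  · exact absurd rfl hBB'
  · exact (T.disjoint_span_singleton hl' (by simp [h3', h4'])).symm
  · exact T.disjoint_span_singleton hl (by simp [h1, h2])
  · exact T.disjoint_span_singleton hl (by simp [h3, h4])
  · exact T.disjoint_span_singleton hl fun h => hBB' (by rw [Set.mem_singleton_iff.mp h])

end UTree

section Quartets

variable {L : Type u}

lemma isQuartet_quartet_iff {x y z w : L} :
    IsQuartet (quartet x y z w) ↔ x ≠ y ∧ x ≠ z ∧ x ≠ w ∧ y ≠ z ∧ y ≠ w ∧ z ≠ w := by
  refine ⟨fun ⟨a, b, c, d, hab, hac, had, hbc, hbd, hcd, h⟩ => ?_,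
    fun h => ⟨x, y, z, w, h.1, h.2.1, h.2.2.1, h.2.2.2.1, h.2.2.2.2.1, h.2.2.2.2.2, rfl⟩⟩
  obtain ⟨h1, h2⟩ | ⟨h1, h2⟩ := Sym2.eq_iff.mp h <;> rw [Sym2.eq_iff] at h1 h2 <;>
    obtain ⟨rfl, rfl⟩ | ⟨rfl, rfl⟩ := h1 <;> obtain ⟨rfl, rfl⟩ | ⟨rfl, rfl⟩ := h2 <;> tauto

lemma labels_mem_of_quartet {S : Set L} {x y z w : L}
    (h : ∀ p ∈ quartet x y z w, ∀ l ∈ p, l ∈ S) : x ∈ S ∧ y ∈ S ∧ z ∈ S ∧ w ∈ S :=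
  ⟨h _ (Sym2.mem_mk_left _ _) _ (Sym2.mem_mk_left _ _),
    h _ (Sym2.mem_mk_left _ _) _ (Sym2.mem_mk_right _ _),
    h _ (Sym2.mem_mk_right _ _) _ (Sym2.mem_mk_left _ _),
    h _ (Sym2.mem_mk_right _ _) _ (Sym2.mem_mk_right _ _)⟩

lemma pair_ne_pair_of_ne {x y z w : L} (hxz : x ≠ z) (hxw : x ≠ w) :
    ({x, y} : Set L) ≠ {z, w} := by
  intro h
  have hx : x ∈ ({z, w} : Set L) := h ▸ Set.mem_insert x {y}
  rcases hx with hx | hx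
  exacts [hxz hx, hxw hx]

lemma pair_eq_of_pair_mem_chiQ {S : Set L} {u v x y z w : L} (huv : u ≠ v)
    (h : ({u, v} : Set L) ∈ chiQ S x y z w) : s(u, v) = s(x, y) ∨ s(u, v) = s(z, w) := by
  simp only [Sym2.eq_iff, ← Set.pair_eq_pair_iff]
  rcases h with (h | h) | ⟨l, -, -, -, -, -, h⟩
  · exact Or.inl h
  · exact Or.inr h
  · have hl := (Set.eq_singleton_iff_unique_mem.mp h).2
    exact absurd ((hl u (by simp)).trans (hl v (by simp)).symm) huv

lemma quartet_eq_of_chiQ_eq {S : Set L} {x y z w a b c d : L} (hxy : x ≠ y) (hzw : z ≠ w)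
    (hxz : x ≠ z) (hxw : x ≠ w) (h : chiQ S x y z w = chiQ S a b c d) :
    quartet x y z w = quartet a b c d := by
  have hne : s(x, y) ≠ s(z, w) := by simp [hxz, hxw]
  have hxy' : s(x, y) = s(a, b) ∨ s(x, y) = s(c, d) :=
    pair_eq_of_pair_mem_chiQ hxy (by rw [← h]; exact Or.inl (Or.inl rfl))
  have hzw' : s(z, w) = s(a, b) ∨ s(z, w) = s(c, d) :=
    pair_eq_of_pair_mem_chiQ hzw (by rw [← h]; exact Or.inl (Or.inr rfl))
  unfold quartet
  rcases hxy' with h1 | h1 <;> rcases hzw' with h2 | h2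
  · exact absurd (h1.trans h2.symm) hne
  · rw [h1, h2]
  · rw [h1, h2, Sym2.eq_swap]
  · exact absurd (h1.trans h2.symm) hne

lemma ncard_chiQ {S : Set L} {x y z w : L} (hx : x ∈ S) (hy : y ∈ S) (hz : z ∈ S) (hw : w ∈ S)
    (hxy : x ≠ y) (hxz : x ≠ z) (hxw : x ≠ w) (hyz : y ≠ z) (hyw : y ≠ w) (hzw : z ≠ w) :
    (chiQ S x y z w).ncard = S.ncard - 2 := by
  classical
  let f : L → Set L := fun l => if l = x then {x, y} else if l = z then {z, w} else {l}
  have himage : f '' (S \ {y, w}) = chiQ S x y z w := by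
    ext B
    simp only [f, chiQ, Set.mem_image, Set.mem_sdiff, Set.mem_insert_iff, Set.mem_singleton_iff,
      Set.mem_union, Set.mem_ofPred_eq]
    grind
  have hinj : Set.InjOn f (S \ {y, w}) := by
    intro l hl l' hl' h
    simp only [f, Set.mem_sdiff, Set.mem_insert_iff, Set.mem_singleton_iff] at hl hl' h
    grind [Set.pair_eq_pair_iff, Set.singleton_eq_singleton_iff, Set.eq_singleton_iff_unique_mem]
  rw [← himage, hinj.ncard_image, Set.ncard_sdiff (Set.pair_subset hy hw), Set.ncard_pair hyw]

lemma exists_eq_quartet (q : Sym2 (Sym2 L)) : ∃ x y z w : L, q = quartet x y z w := by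
  induction q using Sym2.inductionOn with
  | _ p p' =>
    induction p using Sym2.inductionOn with
    | _ x y =>
      induction p' using Sym2.inductionOn with
      | _ z w => exact ⟨x, y, z, w, rfl⟩

/-- `χ_q` read off the quartet `q` itself rather than from a representative `xy|zw`. -/
def quartetChar (S : Set L) (q : Sym2 (Sym2 L)) : Set (Set L) :=
  {B | (∃ u v : L, s(u, v) ∈ q ∧ B = {u, v}) ∨ ∃ l ∈ S, (∀ p ∈ q, l ∉ p) ∧ B = {l}}

lemma quartetChar_quartet (S : Set L) (x y z w : L) :
    quartetChar S (quartet x y z w) = chiQ S x y z w := by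
  ext B
  simp only [quartetChar, chiQ, quartet, Set.mem_ofPred_eq, Set.mem_union, Set.mem_insert_iff,
    Set.mem_singleton_iff, Sym2.mem_iff, Sym2.eq_iff, forall_eq_or_imp, forall_eq, not_or]
  grind [Set.pair_comm]

lemma CQ_eq_image (S : Set L) (Q : Set (Sym2 (Sym2 L))) : CQ S Q = quartetChar S '' Q := by
  ext χ
  constructor
  · rintro ⟨q, hq, x, y, z, w, rfl, rfl⟩
    exact ⟨_, hq, quartetChar_quartet S x y z w⟩
  · rintro ⟨q, hq, rfl⟩
    obtain ⟨x, y, z, w, rfl⟩ := exists_eq_quartet q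
    exact ⟨_, hq, x, y, z, w, rfl, quartetChar_quartet S x y z w⟩

lemma quartetChar_injOn (S : Set L) : Set.InjOn (quartetChar S) {q | IsQuartet q} := by
  rintro _ ⟨x, y, z, w, hxy, hxz, hxw, -, -, hzw, rfl⟩ _ ⟨a, b, c, d, -, -, -, -, -, -, rfl⟩ h
  rw [quartetChar_quartet, quartetChar_quartet] at h
  exact quartet_eq_of_chiQ_eq hxy hzw hxz hxw h

lemma ncard_quartetChar {S : Set L} {q : Sym2 (Sym2 L)} (hq : IsQuartet q)
    (hqS : ∀ p ∈ q, ∀ l ∈ p, l ∈ S) : (quartetChar S q).ncard = S.ncard - 2 := by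
  obtain ⟨x, y, z, w, hxy, hxz, hxw, hyz, hyw, hzw, rfl⟩ := hq
  obtain ⟨hx, hy, hz, hw⟩ := labels_mem_of_quartet hqS
  rw [quartetChar_quartet, ncard_chiQ hx hy hz hw hxy hxz hxw hyz hyw hzw]

lemma UTree.convexOn_quartetChar_iff {S : Set L} (T : UTree L S) {q : Sym2 (Sym2 L)}
    (hq : IsQuartet q) (hqS : ∀ p ∈ q, ∀ l ∈ p, l ∈ S) :
    T.convexOn (quartetChar S q) ↔ T.displays q := by
  have hrep : ∀ {x y z w : L}, q = quartet x y z w →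
      (T.convexOn (quartetChar S q) ↔ T.displays4 x y z w) := by
    rintro x y z w rfl
    obtain ⟨hxy, hxz, hxw, -, -, -⟩ := isQuartet_quartet_iff.mp hq
    obtain ⟨hx, hy, hz, hw⟩ := labels_mem_of_quartet hqS
    rw [quartetChar_quartet, T.convexOn_chiQ_iff (pair_ne_pair_of_ne hxz hxw),
      T.displays4_iff_disjoint_span hx hy hz hw]
  obtain ⟨x, y, z, w, -, -, -, -, -, -, hq⟩ := hq
  exact ⟨fun h _ _ _ _ h' => (hrep h').mp h, fun h => (hrep hq).mpr (h x y z w hq)⟩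

end Quartets

theorem CQ_minimal_incompatible_general (n : ℕ) (Q : Set (Sym2 (Sym2 ℕ)))
    (hQ : ∀ q ∈ Q, IsQuartet q)
    (hn : (qLabelSet Q).ncard = n)
    (hinc : ¬ QCompat (qLabelSet Q) Q)
    (hsub : ∀ Q', Q' ⊂ Q → QCompat (qLabelSet Q) Q') :
    (CQ (qLabelSet Q) Q).ncard = Q.ncard ∧
    (∀ χ ∈ CQ (qLabelSet Q) Q, χ.ncard ≤ n - 2) ∧
    ¬ CCompat (qLabelSet Q) (CQ (qLabelSet Q) Q) ∧
    (∀ C', C' ⊂ CQ (qLabelSet Q) Q → CCompat (qLabelSet Q) C') := by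
  set S := qLabelSet Q
  have hlabels : ∀ q ∈ Q, ∀ p ∈ q, ∀ l ∈ p, l ∈ S := fun q hq p hp l hl => ⟨q, hq, p, hp, hl⟩
  have hconvex (T : UTree ℕ S) {q} (hq : q ∈ Q) : T.convexOn (quartetChar S q) ↔ T.displays q :=
    T.convexOn_quartetChar_iff (hQ q hq) (hlabels q hq)
  rw [CQ_eq_image]
  refine ⟨(quartetChar_injOn S).mono hQ |>.ncard_image, ?_, ?_, ?_⟩
  · rintro _ ⟨q, hq, rfl⟩
    exact (ncard_quartetChar (hQ q hq) (hlabels q hq)).trans_le (by rw [hn])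
  · rintro ⟨T, hT⟩
    exact hinc ⟨T, fun q hq => (hconvex T hq).mp (hT _ ⟨q, hq, rfl⟩)⟩
  · intro C' hC'
    obtain ⟨Q', hQ'Q, rfl⟩ := Set.subset_image_iff.mp hC'.subset
    obtain ⟨T, hT⟩ := hsub Q' (hQ'Q.ssubset_of_ne (by rintro rfl; exact hC'.ne rfl))
    exact ⟨T, fun _ ⟨q, hq, hχ⟩ => hχ ▸ (hconvex T (hQ'Q hq)).mpr (hT q hq)⟩

/-- if `Q` over n labels is incompatible with all proper subsets compatible,
then `C_Q` consists of `|Q|` many (n-2)-state characters, is incompatible, and every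
proper subset of `C_Q` is compatible. -/
theorem CQ_minimal_incompatible (n : ℕ) (Q : Set (Sym2 (Sym2 ℕ))) (hfin : Q.Finite)
    (hQ : ∀ q ∈ Q, IsQuartet q) (hLfin : (qLabelSet Q).Finite)
    (hn : (qLabelSet Q).ncard = n)
    (hinc : ¬ QCompat (qLabelSet Q) Q)
    (hsub : ∀ Q', Q' ⊂ Q → QCompat (qLabelSet Q) Q') :
    (CQ (qLabelSet Q) Q).ncard = Q.ncard ∧
    (∀ χ ∈ CQ (qLabelSet Q) Q, χ.ncard ≤ n - 2) ∧
    ¬ CCompat (qLabelSet Q) (CQ (qLabelSet Q) Q) ∧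
    (∀ C', C' ⊂ CQ (qLabelSet Q) Q → CCompat (qLabelSet Q) C') :=
  CQ_minimal_incompatible_general n Q hQ hn hinc hsub
end
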